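/- arXiv:1109.1549 — 2 statements merged into one kernel-verified Lean document; each statement's English description precedes it below -/
import Mathlib

section
/- For the Ising model on a finite graph G at inverse temperature β > 0 with free boundary conditions, the partition function satisfies Z = 2^{|V(G)|} · cosh(β)^{|E(G)|} · Σ_{ω ∈ E_G} tanh(β)^{|ω|}, where E_G is the set of subsets ω of the edges of G such that every vertex is incident to an even number of edges of ω. -/
/-!
Since `σ_x σ_y = ±1`, each Boltzmann factor is `exp (β σ_x σ_y) = cosh β (1 + tanh β σ_x σ_y)`.
Expanding the product over edges gives a sum over edge subsets `ω` of `tanh β ^ |ω|` times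
`∏_{xy ∈ ω} σ_x σ_y = ∏_v σ_v ^ deg_ω v`. Summing over the spins independently at each vertex,
`∑_{s = ±1} s ^ d` is `2` for even `d` and `0` otherwise, so only the even subgraphs `ω` survive,
each with weight `2 ^ |V|`.
-/

open Finset

/-- The spin product `σ_x σ_y` along an edge of a graph, for spins `σ : V → {±1}`
(encoded as units of `ℤ`), viewed as a real number. -/
def edgeSpin {V : Type*} (σ : V → ℤˣ) : Sym2 V → ℝ :=
  Sym2.lift ⟨fun x y => (((σ x * σ y : ℤˣ) : ℤ) : ℝ), by
    intro x y; simp [mul_comm]⟩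

lemma edgeSpin_eq_one_or_neg_one {V : Type*} (σ : V → ℤˣ) (e : Sym2 V) :
    edgeSpin σ e = 1 ∨ edgeSpin σ e = -1 := by
  induction e using Sym2.ind with
  | _ x y =>
    change (((σ x * σ y : ℤˣ) : ℤ) : ℝ) = 1 ∨ (((σ x * σ y : ℤˣ) : ℤ) : ℝ) = -1
    rcases Int.units_eq_one_or (σ x * σ y) with h | h <;> simp [h]

lemma exp_mul_eq_cosh_mul_one_add_tanh_mul (β : ℝ) {s : ℝ} (hs : s = 1 ∨ s = -1) :
    Real.exp (β * s) = Real.cosh β * (1 + Real.tanh β * s) := by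
  have hcosh : Real.cosh β ≠ 0 := (Real.cosh_pos β).ne'
  rw [Real.tanh_eq_sinh_div_cosh]
  rcases hs with rfl | rfl
  · field_simp
    rw [Real.cosh_add_sinh]
  · field_simp
    rw [← Real.cosh_sub_sinh]
    ring

lemma sum_units_int_pow {R : Type*} [Ring R] (d : ℕ) :
    ∑ u : ℤˣ, ((u : ℤ) : R) ^ d = if Even d then 2 else 0 := by
  rw [show (univ : Finset ℤˣ) = {1, -1} by decide, sum_pair (by decide)]
  rcases Nat.even_or_odd d with hd | hd
  · simp [hd.neg_one_pow, hd, one_add_one_eq_two]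
  · simp [hd.neg_one_pow, Nat.not_even_iff_odd.2 hd]

lemma exp_mul_sum_edgeSpin {V : Type*} (β : ℝ) (σ : V → ℤˣ) (E : Finset (Sym2 V)) :
    Real.exp (β * ∑ e ∈ E, edgeSpin σ e) =
      Real.cosh β ^ #E * ∑ ω ∈ E.powerset, Real.tanh β ^ #ω * ∏ e ∈ ω, edgeSpin σ e := by
  rw [mul_sum, Real.exp_sum, prod_congr rfl fun e _ =>
      exp_mul_eq_cosh_mul_one_add_tanh_mul β (edgeSpin_eq_one_or_neg_one σ e),
    prod_mul_distrib, prod_const, prod_one_add]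
  simp_rw [prod_mul_distrib, prod_const]

section Spins

variable {V : Type*} [Fintype V] [DecidableEq V]

lemma edgeSpin_eq_prod_of_not_isDiag (σ : V → ℤˣ) {e : Sym2 V} (he : ¬ e.IsDiag) :
    edgeSpin σ e = ∏ v, if v ∈ e then ((σ v : ℤ) : ℝ) else 1 := by
  induction e using Sym2.ind with
  | _ x y =>
    have hxy : x ≠ y := by simpa using he
    have hsupport : univ.filter (· ∈ s(x, y)) = {x, y} := by
      ext v
      simp [Sym2.mem_iff]
    rw [← prod_filter, hsupport, prod_pair hxy]
    simp [edgeSpin]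

lemma prod_edgeSpin_eq_prod_pow_degree {E : Finset (Sym2 V)} (hE : ∀ e ∈ E, ¬ e.IsDiag)
    (σ : V → ℤˣ) :
    ∏ e ∈ E, edgeSpin σ e = ∏ v, ((σ v : ℤ) : ℝ) ^ #(E.filter (v ∈ ·)) := by
  rw [prod_congr rfl fun e he => edgeSpin_eq_prod_of_not_isDiag σ (hE e he), prod_comm]
  refine prod_congr rfl fun v _ => ?_
  rw [prod_ite, prod_const, prod_const_one, mul_one]

lemma sum_prod_edgeSpin {E : Finset (Sym2 V)} (hE : ∀ e ∈ E, ¬ e.IsDiag) :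
    ∑ σ : V → ℤˣ, ∏ e ∈ E, edgeSpin σ e =
      if ∀ v, Even #(E.filter (v ∈ ·)) then 2 ^ Fintype.card V else 0 := by
  simp_rw [prod_edgeSpin_eq_prod_pow_degree hE]
  rw [← Fintype.prod_sum fun v (u : ℤˣ) => ((u : ℤ) : ℝ) ^ #(E.filter (v ∈ ·))]
  simp_rw [sum_units_int_pow]
  rw [Fintype.prod_ite_zero, prod_const, card_univ]

theorem sum_exp_mul_sum_edgeSpin {E : Finset (Sym2 V)} (hE : ∀ e ∈ E, ¬ e.IsDiag) (β : ℝ) :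
    ∑ σ : V → ℤˣ, Real.exp (β * ∑ e ∈ E, edgeSpin σ e) =
      2 ^ Fintype.card V * Real.cosh β ^ #E *
        ∑ ω ∈ E.powerset.filter (fun ω => ∀ v, Even #(ω.filter (v ∈ ·))), Real.tanh β ^ #ω := by
  calc ∑ σ : V → ℤˣ, Real.exp (β * ∑ e ∈ E, edgeSpin σ e)
      = Real.cosh β ^ #E * ∑ ω ∈ E.powerset,
          Real.tanh β ^ #ω * ∑ σ : V → ℤˣ, ∏ e ∈ ω, edgeSpin σ e := by
        simp_rw [exp_mul_sum_edgeSpin, mul_sum]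
        rw [sum_comm]
    _ = Real.cosh β ^ #E * ∑ ω ∈ E.powerset,
          if ∀ v, Even #(ω.filter (v ∈ ·)) then 2 ^ Fintype.card V * Real.tanh β ^ #ω else 0 := by
        refine congrArg _ (sum_congr rfl fun ω hω => ?_)
        rw [sum_prod_edgeSpin fun e he => hE e (mem_powerset.1 hω he), mul_ite, mul_zero, mul_comm]
    _ = _ := by
        rw [← sum_filter, ← mul_sum]
        ring

end Spins

theorem ising_partition_high_temperature_expansion_general
    {V : Type*} [Fintype V] [DecidableEq V] (G : SimpleGraph V) [DecidableRel G.Adj]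
    (β : ℝ) :
    ∑ σ : V → ℤˣ, Real.exp (β * ∑ e ∈ G.edgeFinset, edgeSpin σ e) =
      2 ^ (Fintype.card V) * Real.cosh β ^ G.edgeFinset.card *
        ∑ ω ∈ G.edgeFinset.powerset.filter
            (fun ω => ∀ v : V, Even ((ω.filter (fun e => v ∈ e)).card)),
          Real.tanh β ^ ω.card :=
  sum_exp_mul_sum_edgeSpin
    (fun _ he => G.not_isDiag_of_mem_edgeSet (SimpleGraph.mem_edgeFinset.1 he)) β

/-- **Low/high temperature expansion of the Ising partition function.**
For the Ising model on a finite graph `G` at inverse temperature `β > 0` with free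
boundary conditions, the partition function
`Z = Σ_σ exp (β Σ_{xy ∈ E} σ_x σ_y)` equals
`2^{|V|} cosh(β)^{|E|} Σ_{ω ∈ E_G} tanh(β)^{|ω|}`,
where `E_G` is the collection of edge subsets in which every vertex has even degree. -/
theorem ising_partition_high_temperature_expansion
    {V : Type*} [Fintype V] [DecidableEq V] (G : SimpleGraph V) [DecidableRel G.Adj]
    (β : ℝ) (hβ : 0 < β) :
    ∑ σ : V → ℤˣ, Real.exp (β * ∑ e ∈ G.edgeFinset, edgeSpin σ e) =
      2 ^ (Fintype.card V) * Real.cosh β ^ G.edgeFinset.card *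
        ∑ ω ∈ G.edgeFinset.powerset.filter
            (fun ω => ∀ v : V, Even ((ω.filter (fun e => v ∈ e)).card)),
          Real.tanh β ^ ω.card :=
  ising_partition_high_temperature_expansion_general G β
end

section
/- Let f be an s-holomorphic function on a simply connected medial domain Ω_δ^⋄. Then for each medial vertex v with four incident medial edges n, e, s, w (with ℓ(n) ⊥ ℓ(s) and ℓ(e) ⊥ ℓ(w)), the identity |P_{ℓ(n)}[f(v)]|² + |P_{ℓ(s)}[f(v)]|² = |f(v)|² = |P_{ℓ(e)}[f(v)]|² + |P_{ℓ(w)}[f(v)]|² holds; consequently there exists a well-defined function H on the union of black and white faces, unique up to an additive constant, satisfying H(b) - H(w) = δ·|P_{ℓ(e)}[f(x)]|² for each medial edge e = [xy] separating black face b from white face w. -/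
/-- Orthogonal projection of `z ∈ ℂ` onto the line `u·ℝ` through the origin
(for `|u| = 1`): `P_{uℝ}(z) = (z + u² z̄)/2`. -/
noncomputable def lineProj (u z : ℂ) : ℂ := (z + u ^ 2 * (starRingEnd ℂ) z) / 2

/-- In the medial lattice of mesh `δ`, faces are indexed by `ℤ²`, a face `(m,n)` being
black iff `m + n` is even, and medial vertices are indexed by `ℤ²` (the vertex `(m,n)`
being the common corner of the faces `(m,n)`, `(m+1,n)`, `(m,n+1)`, `(m+1,n+1)`).
`uVertEdge m n` spans the line `ℓ(e) = √(ē)ℝ` of the (oriented, counterclockwise around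
black faces) medial edge separating the faces `(m,n)` and `(m+1,n)`. -/
noncomputable def uVertEdge (m n : ℤ) : ℂ :=
  if Even (m + n) then Complex.exp (-(Real.pi / 4) * Complex.I)
  else Complex.exp (Real.pi / 4 * Complex.I)

/-- The direction spanning the line `ℓ(e)` of the medial edge separating the faces
`(m,n)` and `(m,n+1)`. -/
noncomputable def uHorEdge (m n : ℤ) : ℂ := if Even (m + n) then Complex.I else 1

/-- `H` is a primitive of `Im(f² dz)`: across each medial edge `e = [xy]` separating a
black face `b` from a white face `w`, `H(b) - H(w) = δ |P_{ℓ(e)}[f(x)]|²`.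
The medial edge separating faces `(m,n)` and `(m+1,n)` has endpoints the medial
vertices `(m,n)` and `(m,n-1)`; the one separating `(m,n)` and `(m,n+1)` has endpoints
`(m,n)` and `(m-1,n)`. -/
noncomputable def IsPrimitiveOfImFSq (δ : ℝ) (f : ℤ × ℤ → ℂ) (H : ℤ × ℤ → ℝ) : Prop :=
  ∀ m n : ℤ,
    ((if Even (m + n) then H (m, n) - H (m + 1, n) else H (m + 1, n) - H (m, n))
      = δ * ‖lineProj (uVertEdge m n) (f (m, n))‖ ^ 2) ∧
    ((if Even (m + n) then H (m, n) - H (m, n + 1) else H (m, n + 1) - H (m, n))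
      = δ * ‖lineProj (uHorEdge m n) (f (m, n))‖ ^ 2)

/-!
Across a medial edge `e = [xy]`, s-holomorphicity says that `f(x)` and `f(y)` have the same
projection onto `ℓ(e)`, so the four increments of `H` around a medial vertex `v` can all be
read off `f(v)`. The lines of opposite edges at `v` are perpendicular, so by Pythagoras both
paths between opposite faces around `v` have total increment `±δ |f(v)|²`: the increment form
is closed. On `ℤ²` a closed discrete 1-form has a primitive (sum along a row, then up a
column), unique up to an additive constant.
-/

theorem Int.apply_eq_apply_zero_of_add_one {α : Type*} {h : ℤ → α} (hh : ∀ n, h (n + 1) = h n)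
    (n : ℤ) : h n = h 0 := by
  simpa using Function.Periodic.int_mul_eq (c := (1 : ℤ)) hh n

section DiscretePrimitive

variable {G : Type*} [AddCommGroup G]

theorem Int.exists_primitive (g : ℤ → G) : ∃ h : ℤ → G, h 0 = 0 ∧ ∀ n, h (n + 1) - h n = g n := by
  -- one of the two sums is always empty
  refine ⟨fun n => ∑ k ∈ Finset.Ico 0 n, g k - ∑ k ∈ Finset.Ico n 0, g k, by simp, fun n => ?_⟩
  dsimp only
  rcases le_or_gt 0 n with hn | hn
  · rw [← Finset.sum_Ico_add_eq_sum_Ico_add_one hn, Finset.Ico_eq_empty_of_le hn,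
      Finset.Ico_eq_empty_of_le (by omega : (0 : ℤ) ≤ n + 1)]
    simp
  · rw [← Finset.insert_Ico_add_one_left_eq_Ico hn, Finset.sum_insert (by simp),
      Finset.Ico_eq_empty_of_le hn.le, Finset.Ico_eq_empty_of_le (by omega : n + 1 ≤ 0)]
    abel

def IsDiscretePrimitive (dx dy : ℤ → ℤ → G) (H : ℤ × ℤ → G) : Prop :=
  ∀ m n, H (m + 1, n) - H (m, n) = dx m n ∧ H (m, n + 1) - H (m, n) = dy m n

theorem exists_isDiscretePrimitive {dx dy : ℤ → ℤ → G}
    (hclosed : ∀ m n, dx m n + dy (m + 1) n = dy m n + dx m (n + 1)) :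
    ∃ H, IsDiscretePrimitive dx dy H := by
  obtain ⟨P, -, hP⟩ := Int.exists_primitive fun m => dx m 0
  choose Q hQ₀ hQ using fun m => Int.exists_primitive (dy m)
  refine ⟨fun v => P v.1 + Q v.1 v.2, fun m n => ⟨?_, by simp [← hQ]⟩⟩
  -- the defect of the `x`-increment is constant along column `m` by closedness, and vanishes
  -- on row `0` by the choice of `P`
  set defect : ℤ → G := fun k => P (m + 1) + Q (m + 1) k - (P m + Q m k) - dx m k
  have hinv : ∀ k, defect (k + 1) = defect k := by
    intro k
    have := hclosed m k
    rw [← hQ, ← hQ, ← sub_eq_zero] at this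
    rw [← sub_eq_zero, ← this]
    simp only [defect]
    abel
  have hdefect : defect n = 0 := by
    rw [Int.apply_eq_apply_zero_of_add_one hinv n]
    simp only [defect, hQ₀, ← hP]
    abel
  exact sub_eq_zero.mp hdefect

theorem IsDiscretePrimitive.exists_eq_add_const {dx dy : ℤ → ℤ → G} {H H' : ℤ × ℤ → G}
    (hH : IsDiscretePrimitive dx dy H) (hH' : IsDiscretePrimitive dx dy H') :
    ∃ c, ∀ v, H' v = H v + c := by
  set u : ℤ × ℤ → G := H' - H
  have hx : ∀ m n, u (m + 1, n) = u (m, n) := fun m n =>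
    sub_eq_sub_iff_sub_eq_sub.mp ((hH' m n).1.trans (hH m n).1.symm)
  have hy : ∀ m n, u (m, n + 1) = u (m, n) := fun m n =>
    sub_eq_sub_iff_sub_eq_sub.mp ((hH' m n).2.trans (hH m n).2.symm)
  refine ⟨u (0, 0), fun ⟨m, n⟩ => ?_⟩
  have hu : u (m, n) = u (0, 0) :=
    (Int.apply_eq_apply_zero_of_add_one (h := fun k => u (m, k)) (hy m) n).trans
      (Int.apply_eq_apply_zero_of_add_one (h := fun k => u (k, 0)) (fun k => hx k 0) m)
  rw [← hu]
  simp [u]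

end DiscretePrimitive

theorem norm_sq_lineProj_add_norm_sq_lineProj {u v : ℂ} (hu : ‖u‖ = 1) (huv : v ^ 2 = -u ^ 2)
    (z : ℂ) : ‖lineProj u z‖ ^ 2 + ‖lineProj v z‖ ^ 2 = ‖z‖ ^ 2 := by
  have hw : Complex.normSq (u ^ 2 * (starRingEnd ℂ) z) = Complex.normSq z := by
    rw [← Complex.sq_norm, norm_mul, norm_pow, hu, Complex.norm_conj, one_pow, one_mul,
      Complex.sq_norm]
  simp only [lineProj, huv, neg_mul, ← sub_eq_add_neg, Complex.sq_norm, map_div₀,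
    Complex.normSq_add, Complex.normSq_sub, hw]
  norm_num
  ring

theorem uVertEdge_sq (m n : ℤ) :
    uVertEdge m n ^ 2 = if Even (m + n) then -Complex.I else Complex.I := by
  unfold uVertEdge
  split_ifs
  · rw [← Complex.exp_neg_pi_div_two_mul_I, sq, ← Complex.exp_add]; ring_nf
  · conv_rhs => rw [← Complex.exp_pi_div_two_mul_I]
    rw [sq, ← Complex.exp_add]; ring_nf

theorem norm_uVertEdge (m n : ℤ) : ‖uVertEdge m n‖ = 1 := by
  unfold uVertEdge; split_ifs <;> rw [Complex.norm_exp] <;> simp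

theorem norm_uHorEdge (m n : ℤ) : ‖uHorEdge m n‖ = 1 := by
  unfold uHorEdge; split_ifs <;> simp

theorem uVertEdge_add_one_right_sq (m n : ℤ) : uVertEdge m (n + 1) ^ 2 = -uVertEdge m n ^ 2 := by
  simp only [uVertEdge_sq, ← add_assoc, Int.even_add_one]
  split_ifs <;> simp

theorem uHorEdge_add_one_left_sq (m n : ℤ) : uHorEdge (m + 1) n ^ 2 = -uHorEdge m n ^ 2 := by
  simp only [uHorEdge, add_right_comm m 1 n, Int.even_add_one]
  split_ifs <;> simp

noncomputable def incrementX (δ : ℝ) (f : ℤ × ℤ → ℂ) (m n : ℤ) : ℝ :=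
  if Even (m + n) then -(δ * ‖lineProj (uVertEdge m n) (f (m, n))‖ ^ 2)
  else δ * ‖lineProj (uVertEdge m n) (f (m, n))‖ ^ 2

noncomputable def incrementY (δ : ℝ) (f : ℤ × ℤ → ℂ) (m n : ℤ) : ℝ :=
  if Even (m + n) then -(δ * ‖lineProj (uHorEdge m n) (f (m, n))‖ ^ 2)
  else δ * ‖lineProj (uHorEdge m n) (f (m, n))‖ ^ 2

theorem isPrimitiveOfImFSq_iff (δ : ℝ) (f : ℤ × ℤ → ℂ) (H : ℤ × ℤ → ℝ) :
    IsPrimitiveOfImFSq δ f H ↔ IsDiscretePrimitive (incrementX δ f) (incrementY δ f) H := by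
  refine forall₂_congr fun m n => ?_
  unfold incrementX incrementY
  split_ifs <;> constructor <;> rintro ⟨hx, hy⟩ <;> constructor <;> linarith

theorem incrementX_add_incrementY (δ : ℝ) (f : ℤ × ℤ → ℂ)
    (hsV : ∀ m n : ℤ,
      lineProj (uVertEdge m n) (f (m, n)) = lineProj (uVertEdge m n) (f (m, n - 1)))
    (hsH : ∀ m n : ℤ,
      lineProj (uHorEdge m n) (f (m, n)) = lineProj (uHorEdge m n) (f (m - 1, n)))
    (m n : ℤ) :
    incrementX δ f m n + incrementY δ f (m + 1) n
      = incrementY δ f m n + incrementX δ f m (n + 1) := by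
  have hV := norm_sq_lineProj_add_norm_sq_lineProj (norm_uVertEdge m n)
    (uVertEdge_add_one_right_sq m n) (f (m, n))
  have hH := norm_sq_lineProj_add_norm_sq_lineProj (norm_uHorEdge m n)
    (uHorEdge_add_one_left_sq m n) (f (m, n))
  have hsV' := hsV m (n + 1)
  have hsH' := hsH (m + 1) n
  simp only [add_sub_cancel_right] at hsV' hsH'
  unfold incrementX incrementY
  rw [hsV', hsH']
  simp only [add_right_comm m 1 n, ← add_assoc m n 1, Int.even_add_one]
  split_ifs
  · linear_combination δ * hH - δ * hV
  · linear_combination δ * hV - δ * hH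

theorem sHolomorphic_primitive_exists_general (δ : ℝ) (f : ℤ × ℤ → ℂ)
    (hsV : ∀ m n : ℤ,
      lineProj (uVertEdge m n) (f (m, n)) = lineProj (uVertEdge m n) (f (m, n - 1)))
    (hsH : ∀ m n : ℤ,
      lineProj (uHorEdge m n) (f (m, n)) = lineProj (uHorEdge m n) (f (m - 1, n))) :
    (∀ (z u : ℂ), ‖u‖ = 1 →
      ‖lineProj u z‖ ^ 2 + ‖lineProj (Complex.I * u) z‖ ^ 2
        = ‖z‖ ^ 2) ∧
    ∃ H : ℤ × ℤ → ℝ, IsPrimitiveOfImFSq δ f H ∧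
      ∀ H' : ℤ × ℤ → ℝ, IsPrimitiveOfImFSq δ f H' →
        ∃ c : ℝ, ∀ v : ℤ × ℤ, H' v = H v + c := by
  refine ⟨fun z u hu => norm_sq_lineProj_add_norm_sq_lineProj hu
    (by rw [mul_pow, Complex.I_sq, neg_one_mul]) z, ?_⟩
  obtain ⟨H, hH⟩ := exists_isDiscretePrimitive (incrementX_add_incrementY δ f hsV hsH)
  refine ⟨H, (isPrimitiveOfImFSq_iff δ f H).mpr hH, fun H' hH' => ?_⟩
  exact hH.exists_eq_add_const ((isPrimitiveOfImFSq_iff δ f H').mp hH')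

/-- **Existence of the discrete primitive `H = ½ Im ∫ f²` for an s-holomorphic `f`.**
For `f` s-holomorphic on the (simply connected) medial lattice of mesh `δ` — the
projections of `f` at the two endpoints of each medial edge `e` onto the line `ℓ(e)`
agree — we have, for each medial vertex `v` and perpendicular pairs of lines,
`|P_{ℓ(n)}[f(v)]|² + |P_{ℓ(s)}[f(v)]|² = |f(v)|² = |P_{ℓ(e)}[f(v)]|² + |P_{ℓ(w)}[f(v)]|²`;
consequently there exists `H`, defined on black and white faces and unique up to an
additive constant, with increment `δ |P_{ℓ(e)}[f]|²` from white to black across each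
medial edge. -/
theorem sHolomorphic_primitive_exists (δ : ℝ) (hδ : 0 < δ) (f : ℤ × ℤ → ℂ)
    (hsV : ∀ m n : ℤ,
      lineProj (uVertEdge m n) (f (m, n)) = lineProj (uVertEdge m n) (f (m, n - 1)))
    (hsH : ∀ m n : ℤ,
      lineProj (uHorEdge m n) (f (m, n)) = lineProj (uHorEdge m n) (f (m - 1, n))) :
    (∀ (z u : ℂ), ‖u‖ = 1 →
      ‖lineProj u z‖ ^ 2 + ‖lineProj (Complex.I * u) z‖ ^ 2
        = ‖z‖ ^ 2) ∧
    ∃ H : ℤ × ℤ → ℝ, IsPrimitiveOfImFSq δ f H ∧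
      ∀ H' : ℤ × ℤ → ℝ, IsPrimitiveOfImFSq δ f H' →
        ∃ c : ℝ, ∀ v : ℤ × ℤ, H' v = H v + c :=
  sHolomorphic_primitive_exists_general δ f hsV hsH
end
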